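/- arXiv:2410.02777 — 2 statements merged into one kernel-verified Lean document; each statement's English description precedes it below -/
import Mathlib

section
/- Let Q be a finite index set of N answered queries, each query i having a fixed sensitive attribute s_i ∈ {a,b}; let N_a > 0 and N_b > 0 denote the number of indices with s_i = a and s_i = b respectively, and let ν be a natural number with ν ≤ min(N_a, N_b). Let o_h, o_m : Q → {0,1} be two outcome assignments (the honest outcomes and the measured outcomes), let X_h and X_m be the empirical demographic parity gaps of o_h and o_m respectively, and let ε = |X_h − X_m|. If a subset of size ν is drawn uniformly at random from the group-a indices and, independently, a subset of size ν is drawn uniformly at random from the group-b indices, then the probability that at least one sampled index i satisfies o_m(i) ≠ o_h(i) is at least 1 − (1 − ε/2)^ν. -/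
/-!
Switching outcomes on the set `M` of modified queries moves the positive rate of a group `S`
by at most `|S ∩ M| / |S|`, so `ε ≤ |A ∩ M| / |A| + |B ∩ M| / |B|` and one group, say `A`,
has a fraction at least `ε / 2` of modified queries. The audit misses only if both samples
avoid `M`, which happens with probability at most
`C(|A \ M|, ν) / C(|A|, ν) ≤ (|A \ M| / |A|) ^ ν ≤ (1 - ε / 2) ^ ν`.
-/

open Finset

namespace Nat

theorem descFactorial_mul_pow_le {m n : ℕ} (h : m ≤ n) :
    ∀ k : ℕ, m.descFactorial k * n ^ k ≤ n.descFactorial k * m ^ k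
  | 0 => by simp
  | k + 1 => by
    have hstep : (m - k) * n ≤ (n - k) * m := by
      have := Nat.mul_le_mul_left k h
      rw [Nat.sub_mul, Nat.sub_mul, Nat.mul_comm n m]
      omega
    calc m.descFactorial (k + 1) * n ^ (k + 1)
        = ((m - k) * n) * (m.descFactorial k * n ^ k) := by
          rw [descFactorial_succ, pow_succ]; ring
      _ ≤ ((n - k) * m) * (n.descFactorial k * m ^ k) :=
          Nat.mul_le_mul hstep (descFactorial_mul_pow_le h k)
      _ = n.descFactorial (k + 1) * m ^ (k + 1) := by
          rw [descFactorial_succ, pow_succ]; ring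

theorem choose_mul_pow_le {m n : ℕ} (h : m ≤ n) (k : ℕ) :
    m.choose k * n ^ k ≤ n.choose k * m ^ k := by
  have := descFactorial_mul_pow_le h k
  rw [descFactorial_eq_factorial_mul_choose, descFactorial_eq_factorial_mul_choose,
    Nat.mul_assoc, Nat.mul_assoc] at this
  exact Nat.le_of_mul_le_mul_left this (factorial_pos k)

end Nat

section

variable {K : Type*} [Field K] [LinearOrder K] [IsStrictOrderedRing K]

theorem choose_div_choose_le_div_pow {m n : ℕ} (h : m ≤ n) (k : ℕ) :
    (m.choose k : K) / n.choose k ≤ ((m : K) / n) ^ k := by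
  by_cases hk : n < k
  · rw [Nat.choose_eq_zero_of_lt hk, Nat.cast_zero, div_zero]
    positivity
  rcases n.eq_zero_or_pos with rfl | hn
  · obtain rfl : k = 0 := by omega
    simp
  have hc : (0 : K) < n.choose k := mod_cast Nat.choose_pos (not_lt.1 hk)
  rw [div_pow, div_le_div_iff₀ hc (by positivity)]
  exact_mod_cast (Nat.choose_mul_pow_le h k).trans_eq (Nat.mul_comm _ _)

theorem choose_mul_choose_div_le_div_pow {a a' b b' : ℕ} (ha : a' ≤ a) (hb : b' ≤ b)
    (k : ℕ) :
    (a'.choose k * b'.choose k : K) / (a.choose k * b.choose k) ≤ ((a' : K) / a) ^ k := by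
  rw [← div_mul_div_comm]
  calc (a'.choose k : K) / a.choose k * (b'.choose k / b.choose k)
      ≤ (a'.choose k : K) / a.choose k * 1 := by
        gcongr
        exact div_le_one_of_le₀ (mod_cast Nat.choose_le_choose k hb) (by positivity)
    _ ≤ ((a' : K) / a) ^ k := by
        rw [mul_one]; exact choose_div_choose_le_div_pow ha k

theorem cast_card_filter_not_div_le_one_sub {α : Type*} (s : Finset α) (p : α → Prop)
    [DecidablePred p] :
    (#(s.filter (¬p ·)) : K) / #s ≤ 1 - #(s.filter p) / #s := by
  rw [le_sub_iff_add_le, ← add_div, ← Nat.cast_add, add_comm, card_filter_add_card_filter_not]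
  exact div_self_le_one _

end

namespace Finset

variable {α : Type*}

theorem filter_powersetCard_forall_mem (s : Finset α) (p : α → Prop) [DecidablePred p]
    (k : ℕ) :
    (s.powersetCard k).filter (fun t => ∀ i ∈ t, p i) = (s.filter p).powersetCard k := by
  ext t
  simp only [mem_filter, mem_powersetCard, subset_iff]
  grind

variable [DecidableEq α]

theorem card_filter_not_exists_mem_union_powersetCard_product (s t : Finset α) (p : α → Prop)
    [DecidablePred p] (k : ℕ) :
    #((s.powersetCard k ×ˢ t.powersetCard k).filter fun x => ¬∃ i ∈ x.1 ∪ x.2, p i) =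
      (#(s.filter (¬p ·))).choose k * (#(t.filter (¬p ·))).choose k := by
  have hsplit : ∀ x : Finset α × Finset α,
      (¬∃ i ∈ x.1 ∪ x.2, p i) ↔ (∀ i ∈ x.1, ¬p i) ∧ ∀ i ∈ x.2, ¬p i := by
    intro x; simp only [mem_union]; grind
  rw [filter_congr fun x _ => hsplit x,
    filter_product (fun u => ∀ i ∈ u, ¬p i) (fun u => ∀ i ∈ u, ¬p i),
    filter_powersetCard_forall_mem, filter_powersetCard_forall_mem, card_product,
    card_powersetCard, card_powersetCard]

end Finset

section Audit

variable {α : Type*}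

theorem choose_card_filter_not_mul_choose_div_le {s : Finset α} (p : α → Prop) [DecidablePred p]
    {b b' : ℕ} (hb : b' ≤ b) (k : ℕ) {δ : ℝ} (hδ : δ ≤ #(s.filter p) / #s) :
    ((#(s.filter (¬p ·))).choose k * b'.choose k : ℝ) / ((#s).choose k * b.choose k) ≤
      (1 - δ) ^ k :=
  calc _ ≤ ((#(s.filter (¬p ·)) : ℝ) / #s) ^ k :=
        choose_mul_choose_div_le_div_pow (card_filter_le _ _) hb k
    _ ≤ (1 - δ) ^ k :=
        pow_le_pow_left₀ (by positivity)
          ((cast_card_filter_not_div_le_one_sub s p).trans (by linarith)) k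

theorem one_sub_pow_le_card_filter_exists_mem_union_div [DecidableEq α] {s t : Finset α}
    {k : ℕ} (hs : k ≤ #s) (ht : k ≤ #t) (p : α → Prop) [DecidablePred p] {δ : ℝ}
    (hδ : δ ≤ #(s.filter p) / #s ∨ δ ≤ #(t.filter p) / #t) :
    1 - (1 - δ) ^ k ≤
      #((s.powersetCard k ×ˢ t.powersetCard k).filter fun x => ∃ i ∈ x.1 ∪ x.2, p i) /
        #(s.powersetCard k ×ˢ t.powersetCard k) := by
  set pairs := s.powersetCard k ×ˢ t.powersetCard k
  have hpairs : (#pairs : ℝ) = (#s).choose k * (#t).choose k := by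
    simp [pairs, card_powersetCard]
  have hpos : (0 : ℝ) < #pairs := by
    rw [hpairs]; exact mod_cast Nat.mul_pos (Nat.choose_pos hs) (Nat.choose_pos ht)
  have hdetect : (#(pairs.filter fun x => ∃ i ∈ x.1 ∪ x.2, p i) : ℝ) / #pairs =
      1 - #(pairs.filter fun x => ¬∃ i ∈ x.1 ∪ x.2, p i) / #pairs := by
    rw [eq_sub_iff_add_eq, ← add_div, ← Nat.cast_add, card_filter_add_card_filter_not,
      div_self hpos.ne']
  suffices hmiss : ((#(s.filter (¬p ·))).choose k * (#(t.filter (¬p ·))).choose k : ℝ) /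
      ((#s).choose k * (#t).choose k) ≤ (1 - δ) ^ k by
    rw [hdetect, card_filter_not_exists_mem_union_powersetCard_product, hpairs]
    push_cast
    linarith
  rcases hδ with hδs | hδt
  · exact choose_card_filter_not_mul_choose_div_le p (card_filter_le _ _) k hδs
  · rw [mul_comm, mul_comm ((#s).choose k : ℝ)]
    exact choose_card_filter_not_mul_choose_div_le p (card_filter_le _ _) k hδt

end Audit

section DemographicParity

variable {α : Type*}

noncomputable def positiveRate (s : Finset α) (o : α → Bool) : ℝ :=
  #(s.filter fun i => o i = true) / #s

noncomputable def demographicParityGap (s t : Finset α) (o : α → Bool) : ℝ :=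
  |positiveRate s o - positiveRate t o|

theorem abs_card_filter_sub_card_filter_le (s : Finset α) (f g : α → Bool) :
    |(#(s.filter fun i => f i = true) : ℝ) - #(s.filter fun i => g i = true)| ≤
      #(s.filter fun i => f i ≠ g i) := by
  simp only [natCast_card_filter, ← sum_sub_distrib]
  refine (abs_sum_le_sum_abs _ _).trans_eq (sum_congr rfl fun i _ => ?_)
  cases f i <;> cases g i <;> simp

theorem abs_positiveRate_sub_le (s : Finset α) (f g : α → Bool) :
    |positiveRate s f - positiveRate s g| ≤ #(s.filter fun i => f i ≠ g i) / #s := by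
  rw [positiveRate, positiveRate, ← sub_div, abs_div, Nat.abs_cast]
  gcongr
  exact abs_card_filter_sub_card_filter_le s f g

theorem abs_demographicParityGap_sub_le (s t : Finset α) (f g : α → Bool) :
    |demographicParityGap s t f - demographicParityGap s t g| ≤
      #(s.filter fun i => f i ≠ g i) / #s + #(t.filter fun i => f i ≠ g i) / #t :=
  calc _ ≤ |(positiveRate s f - positiveRate t f) - (positiveRate s g - positiveRate t g)| :=
        abs_abs_sub_abs_le_abs_sub _ _
    _ = |(positiveRate s f - positiveRate s g) - (positiveRate t f - positiveRate t g)| := by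
        ring_nf
    _ ≤ _ := (abs_sub _ _).trans
        (add_le_add (abs_positiveRate_sub_le s f g) (abs_positiveRate_sub_le t f g))

end DemographicParity

theorem audit_soundness_demographic_parity_general
    {Q : Type*} [DecidableEq Q]
    (oh om : Q → Bool)
    (A B : Finset Q)
    (ν : ℕ) (hν : ν ≤ min A.card B.card)
    (Xh Xm ε : ℝ)
    (hXh : Xh = |((A.filter (fun i => oh i = true)).card : ℝ) / (A.card : ℝ)
              - ((B.filter (fun i => oh i = true)).card : ℝ) / (B.card : ℝ)|)
    (hXm : Xm = |((A.filter (fun i => om i = true)).card : ℝ) / (A.card : ℝ)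
              - ((B.filter (fun i => om i = true)).card : ℝ) / (B.card : ℝ)|)
    (hε : ε = |Xh - Xm|) :
    1 - (1 - ε / 2) ^ ν ≤
      ((((A.powersetCard ν) ×ˢ (B.powersetCard ν)).filter
          (fun p => ∃ i ∈ p.1 ∪ p.2, om i ≠ oh i)).card : ℝ) /
        ((((A.powersetCard ν) ×ˢ (B.powersetCard ν)).card : ℝ)) := by
  have hgap : ε ≤ #(A.filter fun i => om i ≠ oh i) / #A +
      #(B.filter fun i => om i ≠ oh i) / #B := by
    rw [hε, abs_sub_comm]
    subst hXh hXm
    exact abs_demographicParityGap_sub_le A B om oh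
  refine one_sub_pow_le_card_filter_exists_mem_union_div (le_min_iff.1 hν).1 (le_min_iff.1 hν).2
    _ ?_
  by_contra! h
  linarith [h.1, h.2]

/-- Soundness of the group-balanced probabilistic audit for the
demographic parity gap: if the honest and measured gaps deviate by `ε`, then a uniform
size-`ν` sample from each group contains a modified query with probability at least
`1 - (1 - ε/2)^ν`. Probabilities are expressed as counting ratios over all pairs of
size-`ν` subsets of each group. -/
theorem audit_soundness_demographic_parity
    {Q : Type*} [Fintype Q] [DecidableEq Q]
    (s : Q → Bool) (oh om : Q → Bool)
    (A B : Finset Q)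
    (hA : A = Finset.univ.filter (fun i => s i = true))
    (hB : B = Finset.univ.filter (fun i => s i = false))
    (hNa : 0 < A.card) (hNb : 0 < B.card)
    (ν : ℕ) (hν : ν ≤ min A.card B.card)
    (Xh Xm ε : ℝ)
    (hXh : Xh = |((A.filter (fun i => oh i = true)).card : ℝ) / (A.card : ℝ)
              - ((B.filter (fun i => oh i = true)).card : ℝ) / (B.card : ℝ)|)
    (hXm : Xm = |((A.filter (fun i => om i = true)).card : ℝ) / (A.card : ℝ)
              - ((B.filter (fun i => om i = true)).card : ℝ) / (B.card : ℝ)|)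
    (hε : ε = |Xh - Xm|) :
    1 - (1 - ε / 2) ^ ν ≤
      ((((A.powersetCard ν) ×ˢ (B.powersetCard ν)).filter
          (fun p => ∃ i ∈ p.1 ∪ p.2, om i ≠ oh i)).card : ℝ) /
        ((((A.powersetCard ν) ×ˢ (B.powersetCard ν)).card : ℝ)) :=
  audit_soundness_demographic_parity_general oh om A B ν hν Xh Xm ε hXh hXm hε
end

section
/- Let Q be a finite index set of N answered queries, each query i having a fixed sensitive attribute s_i ∈ {a,b} and a fixed ground-truth label y_i ∈ {0,1}; let N_a > 0 and N_b > 0 denote the group sizes, and let ν be a natural number with ν ≤ min(N_a, N_b). Let o_h, o_m : Q → {0,1} be two predicted-outcome assignments, let X_h and X_m be the empirical false-positive-rate gaps of o_h and o_m respectively, and let ε = |X_h − X_m|. If a subset of size ν is drawn uniformly at random from the group-a indices and, independently, a subset of size ν is drawn uniformly at random from the group-b indices, then the probability that at least one sampled index i satisfies o_m(i) ≠ o_h(i) is at least 1 − (1 − ε/2)^ν. -/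
/-! Let `D` be the set of queries on which `om` and `oh` differ. Changing one outcome moves a
group's false-positive count by at most one, so `ε ≤ |A ∩ D| / N_a + |B ∩ D| / N_b`, and one of
the two fractions, say the first, is at least `ε / 2`. Both samples miss `D` only if the group-`a`
sample does, which happens with probability
`C(N_a - |A ∩ D|, ν) / C(N_a, ν) ≤ (1 - |A ∩ D| / N_a) ^ ν ≤ (1 - ε / 2) ^ ν`. -/

open Finset

theorem Nat.descFactorial_mul_pow_le_s11 {a n : ℕ} (h : a ≤ n) :
    ∀ ν, a.descFactorial ν * n ^ ν ≤ n.descFactorial ν * a ^ ν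
  | 0 => by simp
  | ν + 1 => by
    have step : (a - ν) * n ≤ (n - ν) * a := by
      rw [Nat.sub_mul, Nat.sub_mul, mul_comm n a]
      exact Nat.sub_le_sub_left (Nat.mul_le_mul_left ν h) _
    calc a.descFactorial (ν + 1) * n ^ (ν + 1)
        = (a.descFactorial ν * n ^ ν) * ((a - ν) * n) := by
          rw [Nat.descFactorial_succ, pow_succ]; ring
      _ ≤ (n.descFactorial ν * a ^ ν) * ((n - ν) * a) :=
          Nat.mul_le_mul (Nat.descFactorial_mul_pow_le_s11 h ν) step
      _ = n.descFactorial (ν + 1) * a ^ (ν + 1) := by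
          rw [Nat.descFactorial_succ, pow_succ]; ring

theorem Nat.choose_mul_pow_le_s11 {a n : ℕ} (h : a ≤ n) (ν : ℕ) :
    a.choose ν * n ^ ν ≤ n.choose ν * a ^ ν := by
  have := Nat.descFactorial_mul_pow_le_s11 h ν
  rw [Nat.descFactorial_eq_factorial_mul_choose, Nat.descFactorial_eq_factorial_mul_choose,
    mul_assoc, mul_assoc] at this
  exact Nat.le_of_mul_le_mul_left this ν.factorial_pos

theorem choose_div_choose_le_pow {a n : ℕ} (h : a ≤ n) (ν : ℕ) :
    (a.choose ν : ℝ) / n.choose ν ≤ ((a : ℝ) / n) ^ ν := by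
  rcases Nat.eq_zero_or_pos n with rfl | hn
  · obtain rfl : a = 0 := Nat.le_zero.mp h
    rcases ν with _ | ν <;> simp
  refine div_le_of_le_mul₀ (by positivity) (by positivity) ?_
  rw [div_pow, div_mul_eq_mul_div, le_div_iff₀ (by positivity), mul_comm _ ((n.choose ν : ℕ) : ℝ)]
  exact_mod_cast Nat.choose_mul_pow_le_s11 h ν

theorem abs_abs_sub_sub_abs_sub_le {G : Type*} [AddCommGroup G] [LinearOrder G]
    [IsOrderedAddMonoid G] (a b c d : G) : |(|a - b| - |c - d|)| ≤ |a - c| + |b - d| :=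
  calc |(|a - b| - |c - d|)| ≤ |(a - c) - (b - d)| := by
        rw [show (a - c) - (b - d) = (a - b) - (c - d) by abel]
        exact abs_abs_sub_abs_le_abs_sub _ _
    _ ≤ |a - c| + |b - d| := abs_sub _ _

section Sampling

variable {α : Type*} {β : Type*} [DecidableEq β] (s : Finset α) (f g : α → β) (P : α → β → Prop)
  [∀ i b, Decidable (P i b)]

theorem card_filter_le_card_filter_add_card_filter_ne :
    #{i ∈ s | P i (f i)} ≤ #{i ∈ s | P i (g i)} + #{i ∈ s | f i ≠ g i} := by
  classical
  refine (card_le_card fun i hi => ?_).trans (card_union_le _ _)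
  rw [mem_filter] at hi
  by_cases hfg : f i = g i
  · exact mem_union_left _ (mem_filter.2 ⟨hi.1, hfg ▸ hi.2⟩)
  · exact mem_union_right _ (mem_filter.2 ⟨hi.1, hfg⟩)

theorem abs_card_filter_div_sub_card_filter_div_le :
    |(#{i ∈ s | P i (f i)} : ℝ) / #s - #{i ∈ s | P i (g i)} / #s| ≤ #{i ∈ s | f i ≠ g i} / #s := by
  rw [← sub_div, abs_div, Nat.abs_cast]
  refine div_le_div_of_nonneg_right (abs_sub_le_iff.2 ⟨?_, ?_⟩) (Nat.cast_nonneg _)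
  · have := card_filter_le_card_filter_add_card_filter_ne s f g P
    rw [sub_le_iff_le_add']
    exact_mod_cast this
  · have := card_filter_le_card_filter_add_card_filter_ne s g f P
    simp_rw [ne_comm (a := g _)] at this
    rw [sub_le_iff_le_add']
    exact_mod_cast this

variable (p : α → Prop) [DecidablePred p]

theorem filter_powersetCard_forall_not (ν : ℕ) :
    {u ∈ s.powersetCard ν | ∀ i ∈ u, ¬ p i} = {i ∈ s | ¬ p i}.powersetCard ν := by
  ext u
  simp only [mem_filter, mem_powersetCard, subset_iff]
  grind

theorem card_filter_div_card_le_one (S : Finset α) (q : α → Prop) [DecidablePred q] :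
    (#{x ∈ S | q x} : ℝ) / #S ≤ 1 :=
  div_le_one_of_le₀ (mod_cast card_filter_le _ _) (Nat.cast_nonneg _)

theorem card_filter_powersetCard_forall_not_div_le {t : ℝ} (ht : t ≤ #{i ∈ s | p i} / #s)
    (ν : ℕ) :
    (#{u ∈ s.powersetCard ν | ∀ i ∈ u, ¬ p i} : ℝ) / #(s.powersetCard ν) ≤ (1 - t) ^ ν := by
  rcases s.eq_empty_or_nonempty with rfl | hs
  · refine (card_filter_div_card_le_one _ _).trans (one_le_pow₀ ?_)
    simpa using ht
  have hs : (#s : ℝ) ≠ 0 := by positivity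
  have hgood : 1 - (#{i ∈ s | p i} : ℝ) / #s = #{i ∈ s | ¬ p i} / #s := by
    rw [eq_div_iff hs, sub_mul, div_mul_cancel₀ _ hs, one_mul, sub_eq_iff_eq_add', ← Nat.cast_add,
      card_filter_add_card_filter_not]
  calc (#{u ∈ s.powersetCard ν | ∀ i ∈ u, ¬ p i} : ℝ) / #(s.powersetCard ν)
      ≤ (1 - #{i ∈ s | p i} / #s) ^ ν := by
        rw [filter_powersetCard_forall_not, card_powersetCard, card_powersetCard, hgood]
        exact choose_div_choose_le_pow (card_filter_le _ _) ν
    _ ≤ (1 - t) ^ ν :=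
        pow_le_pow_left₀ (sub_nonneg.2 (card_filter_div_card_le_one _ _)) (by linarith) ν

theorem card_filter_exists_mem_union_div_card [DecidableEq α] (S T : Finset (Finset α))
    (hS : S.Nonempty) (hT : T.Nonempty) :
    (#{x ∈ S ×ˢ T | ∃ i ∈ x.1 ∪ x.2, p i} : ℝ) / #(S ×ˢ T) =
      1 - (#{u ∈ S | ∀ i ∈ u, ¬ p i} / #S) * (#{u ∈ T | ∀ i ∈ u, ¬ p i} / #T) := by
  have hmiss : {x ∈ S ×ˢ T | ¬ ∃ i ∈ x.1 ∪ x.2, p i} =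
      {u ∈ S | ∀ i ∈ u, ¬ p i} ×ˢ {u ∈ T | ∀ i ∈ u, ¬ p i} := by
    rw [← filter_product]
    refine filter_congr fun x _ => ?_
    simp [or_imp, forall_and]
  have hsplit := card_filter_add_card_filter_not (s := S ×ˢ T) (fun x => ∃ i ∈ x.1 ∪ x.2, p i)
  rw [hmiss, card_product, card_product] at hsplit
  have hST : (#(S ×ˢ T) : ℝ) ≠ 0 := by positivity
  rw [card_product, Nat.cast_mul] at hST ⊢
  rw [div_mul_div_comm, eq_sub_iff_add_eq, ← add_div, div_eq_one_iff_eq hST]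
  exact_mod_cast hsplit

end Sampling

theorem audit_soundness_fpr_gap_general
    {Q : Type*} [DecidableEq Q]
    (y : Q → Bool) (oh om : Q → Bool)
    (A B : Finset Q)
    (ν : ℕ) (hν : ν ≤ min A.card B.card)
    (Xh Xm ε : ℝ)
    (hXh : Xh = |((A.filter (fun i => oh i = true ∧ y i = false)).card : ℝ) / (A.card : ℝ)
              - ((B.filter (fun i => oh i = true ∧ y i = false)).card : ℝ) / (B.card : ℝ)|)
    (hXm : Xm = |((A.filter (fun i => om i = true ∧ y i = false)).card : ℝ) / (A.card : ℝ)
              - ((B.filter (fun i => om i = true ∧ y i = false)).card : ℝ) / (B.card : ℝ)|)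
    (hε : ε = |Xh - Xm|) :
    1 - (1 - ε / 2) ^ ν ≤
      ((((A.powersetCard ν) ×ˢ (B.powersetCard ν)).filter
          (fun p => ∃ i ∈ p.1 ∪ p.2, om i ≠ oh i)).card : ℝ) /
        ((((A.powersetCard ν) ×ˢ (B.powersetCard ν)).card : ℝ)) := by
  set kA : ℝ := #{i ∈ A | om i ≠ oh i} / #A
  set kB : ℝ := #{i ∈ B | om i ≠ oh i} / #B
  have hrate (C : Finset Q) := abs_card_filter_div_sub_card_filter_div_le C om oh
    (fun i b => b = true ∧ y i = false)
  have hgap : ε ≤ kA + kB := by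
    rw [hε, hXh, hXm]
    exact (abs_abs_sub_sub_abs_sub_le _ _ _ _).trans <| add_le_add
      ((abs_sub_comm _ _).trans_le (hrate A)) ((abs_sub_comm _ _).trans_le (hrate B))
  have hmiss : (#{u ∈ A.powersetCard ν | ∀ i ∈ u, ¬ om i ≠ oh i} : ℝ) / #(A.powersetCard ν) *
      (#{u ∈ B.powersetCard ν | ∀ i ∈ u, ¬ om i ≠ oh i} / #(B.powersetCard ν)) ≤
        (1 - ε / 2) ^ ν := by
    rcases le_max_iff.1 (show ε / 2 ≤ max kA kB by
      linarith [le_max_left kA kB, le_max_right kA kB]) with h | h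
    · exact (mul_le_of_le_one_right (by positivity) (card_filter_div_card_le_one _ _)).trans
        (card_filter_powersetCard_forall_not_div_le A _ h ν)
    · exact (mul_le_of_le_one_left (by positivity) (card_filter_div_card_le_one _ _)).trans
        (card_filter_powersetCard_forall_not_div_le B _ h ν)
  rw [card_filter_exists_mem_union_div_card (fun i => om i ≠ oh i) _ _
    (powersetCard_nonempty.2 (hν.trans (min_le_left _ _)))
    (powersetCard_nonempty.2 (hν.trans (min_le_right _ _)))]
  linarith

/-- Audit soundness for the equalized-odds (false-positive-rate gap)
metric: if the honest and measured false-positive-rate gaps deviate by `ε`, then a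
uniform size-`ν` sample from each group contains a modified query with probability at
least `1 - (1 - ε/2)^ν`. -/
theorem audit_soundness_fpr_gap
    {Q : Type*} [Fintype Q] [DecidableEq Q]
    (s : Q → Bool) (y : Q → Bool) (oh om : Q → Bool)
    (A B : Finset Q)
    (hA : A = Finset.univ.filter (fun i => s i = true))
    (hB : B = Finset.univ.filter (fun i => s i = false))
    (hNa : 0 < A.card) (hNb : 0 < B.card)
    (ν : ℕ) (hν : ν ≤ min A.card B.card)
    (Xh Xm ε : ℝ)
    (hXh : Xh = |((A.filter (fun i => oh i = true ∧ y i = false)).card : ℝ) / (A.card : ℝ)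
              - ((B.filter (fun i => oh i = true ∧ y i = false)).card : ℝ) / (B.card : ℝ)|)
    (hXm : Xm = |((A.filter (fun i => om i = true ∧ y i = false)).card : ℝ) / (A.card : ℝ)
              - ((B.filter (fun i => om i = true ∧ y i = false)).card : ℝ) / (B.card : ℝ)|)
    (hε : ε = |Xh - Xm|) :
    1 - (1 - ε / 2) ^ ν ≤
      ((((A.powersetCard ν) ×ˢ (B.powersetCard ν)).filter
          (fun p => ∃ i ∈ p.1 ∪ p.2, om i ≠ oh i)).card : ℝ) /
        ((((A.powersetCard ν) ×ˢ (B.powersetCard ν)).card : ℝ)) :=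
  audit_soundness_fpr_gap_general y oh om A B ν hν Xh Xm ε hXh hXm hε
end
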